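/- Let E ∈ M_n(ℝ) be tropically idempotent and let H_E be its H-class in M_n(ℝ) (the set of matrices with the same row space and the same column space as E). Then the map ψ sending an ℝ-module (max-plus linear) automorphism f of C(E) to the matrix with columns f(E_1),…,f(E_n) is a group isomorphism from Aut(C(E)) onto H_E. -/

import Mathlib

open Finset Matrix

/-- Tropical (max-plus) matrix multiplication on n × n real matrices. -/
noncomputable def tmul {n : ℕ} [NeZero n] (A B : Matrix (Fin n) (Fin n) ℝ) :
    Matrix (Fin n) (Fin n) ℝ :=
  fun i j => univ.sup' univ_nonempty (fun k => A i k + B k j)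

/-- Tropical action of a matrix on a vector: (A ⊗ x)_i = max_k (A_{i,k} + x_k). -/
noncomputable def tvec {n : ℕ} [NeZero n] (A : Matrix (Fin n) (Fin n) ℝ) (x : Fin n → ℝ) :
    Fin n → ℝ :=
  fun i => univ.sup' univ_nonempty (fun k => A i k + x k)

/-- Tropical column space: all tropical linear combinations of columns of A. -/
noncomputable def colSpace {n : ℕ} [NeZero n] (A : Matrix (Fin n) (Fin n) ℝ) :
    Set (Fin n → ℝ) :=
  Set.range (tvec A)

/-- The H-class of E: matrices with the same row space and column space as E. -/
noncomputable def Hclass {n : ℕ} [NeZero n] (E : Matrix (Fin n) (Fin n) ℝ) :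
    Set (Matrix (Fin n) (Fin n) ℝ) :=
  {A | colSpace A = colSpace E ∧ colSpace Aᵀ = colSpace Eᵀ}

/-- A max-plus linear automorphism of the column space C(E): a function which
maps C(E) bijectively onto itself, respecting tropical sums (componentwise max)
and tropical scaling (adding a constant) of elements of C(E). -/
def IsTropAut {n : ℕ} [NeZero n] (E : Matrix (Fin n) (Fin n) ℝ)
    (f : (Fin n → ℝ) → (Fin n → ℝ)) : Prop :=
  Set.BijOn f (colSpace E) (colSpace E) ∧
  (∀ x ∈ colSpace E, ∀ y ∈ colSpace E, f (x ⊔ y) = f x ⊔ f y) ∧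
  (∀ (lam : ℝ), ∀ x ∈ colSpace E, f (fun i => lam + x i) = fun i => lam + f x i)

section Aux

variable {n : ℕ} [NeZero n]

lemma tadd_sup (a : ℝ) (f : Fin n → ℝ) :
    a + univ.sup' univ_nonempty f = univ.sup' univ_nonempty fun k => a + f k :=
  Finset.add_sup' univ f a univ_nonempty

lemma tsup_add (a : ℝ) (f : Fin n → ℝ) :
    univ.sup' univ_nonempty f + a = univ.sup' univ_nonempty fun k => f k + a :=
  Finset.sup'_add univ f a univ_nonempty

lemma tvec_apply (A : Matrix (Fin n) (Fin n) ℝ) (x : Fin n → ℝ) (i : Fin n) :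
    tvec A x i = univ.sup' univ_nonempty (fun k => A i k + x k) := rfl

lemma tmul_apply (A B : Matrix (Fin n) (Fin n) ℝ) (i j : Fin n) :
    tmul A B i j = tvec A (fun k => B k j) i := rfl


lemma le_tvec (A : Matrix (Fin n) (Fin n) ℝ) (x : Fin n → ℝ) (i k : Fin n) :
    A i k + x k ≤ tvec A x i := Finset.le_sup' (fun k => A i k + x k) (mem_univ k)

lemma le_tmul (A B : Matrix (Fin n) (Fin n) ℝ) (i j k : Fin n) :
    A i k + B k j ≤ tmul A B i j := Finset.le_sup' (fun k => A i k + B k j) (mem_univ k)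

lemma tvec_tmul (A B : Matrix (Fin n) (Fin n) ℝ) (x : Fin n → ℝ) :
    tvec (tmul A B) x = tvec A (tvec B x) := by
  funext i
  apply le_antisymm
  · apply Finset.sup'_le
    intro k _
    rw [show tmul A B i k + x k = univ.sup' univ_nonempty fun l => (A i l + B l k) + x k from
      tsup_add _ _]
    apply Finset.sup'_le
    intro l _
    have h1 : B l k + x k ≤ tvec B x l := le_tvec B x l k
    have : A i l + B l k + x k ≤ A i l + tvec B x l := by
      rw [add_assoc]; exact add_le_add_right h1 _
    exact this.trans (Finset.le_sup' (fun l => A i l + tvec B x l) (mem_univ l))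
  · apply Finset.sup'_le
    intro l _
    rw [show A i l + tvec B x l = univ.sup' univ_nonempty fun k => A i l + (B l k + x k) from
      tadd_sup _ _]
    apply Finset.sup'_le
    intro k _
    have h1 : A i l + B l k ≤ tmul A B i k := le_tmul A B i k l
    have : A i l + (B l k + x k) ≤ tmul A B i k + x k := by
      rw [← add_assoc]; exact add_le_add_left h1 _
    exact this.trans (Finset.le_sup' (fun k => tmul A B i k + x k) (mem_univ k))

lemma tmul_assoc (A B C : Matrix (Fin n) (Fin n) ℝ) :
    tmul (tmul A B) C = tmul A (tmul B C) := by
  funext i j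
  have : tmul (tmul A B) C i j = tvec (tmul A B) (fun k => C k j) i := rfl
  rw [this, tvec_tmul]
  rfl

lemma tmul_transpose (A B : Matrix (Fin n) (Fin n) ℝ) :
    (tmul A B)ᵀ = tmul Bᵀ Aᵀ := by
  funext i j
  show univ.sup' univ_nonempty (fun k => A j k + B k i)
      = univ.sup' univ_nonempty (fun k => B k i + A j k)
  congr 1
  funext k
  ring

lemma tvec_mem_colSpace (A : Matrix (Fin n) (Fin n) ℝ) (x : Fin n → ℝ) :
    tvec A x ∈ colSpace A := ⟨x, rfl⟩

/-- Every column of A lies in the column space of A (over ℝ). -/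
lemma col_mem_colSpace (A : Matrix (Fin n) (Fin n) ℝ) (j : Fin n) :
    (fun i => A i j) ∈ colSpace A := by
  refine ⟨fun k => univ.inf' univ_nonempty (fun i => A i j - A i k), ?_⟩
  funext i
  rw [tvec_apply]
  apply le_antisymm
  · apply Finset.sup'_le
    intro k _
    have : univ.inf' univ_nonempty (fun i' => A i' j - A i' k) ≤ A i j - A i k :=
      Finset.inf'_le _ (mem_univ i)
    linarith
  · have h0 : univ.inf' univ_nonempty (fun i' => A i' j - A i' j) = 0 := by
      have : (fun i' : Fin n => A i' j - A i' j) = fun _ => (0 : ℝ) := by funext; ring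
      simp [this]
    have := Finset.le_sup' (f := fun k => A i k + univ.inf' univ_nonempty
      (fun i' => A i' j - A i' k)) (mem_univ j)
    rw [h0] at this
    simpa only [add_zero] using this

lemma tvec_sup (A : Matrix (Fin n) (Fin n) ℝ) (x y : Fin n → ℝ) :
    tvec A (x ⊔ y) = tvec A x ⊔ tvec A y := by
  funext i
  show univ.sup' univ_nonempty (fun k => A i k + max (x k) (y k))
      = max (tvec A x i) (tvec A y i)
  apply le_antisymm
  · apply Finset.sup'_le
    intro k _
    rcases le_total (x k) (y k) with h | h
    · rw [max_eq_right h]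
      exact le_max_of_le_right (le_tvec A y i k)
    · rw [max_eq_left h]
      exact le_max_of_le_left (le_tvec A x i k)
  · apply max_le <;>
    · apply Finset.sup'_le
      intro k _
      refine le_trans ?_ (Finset.le_sup' (fun k => A i k + max (x k) (y k)) (mem_univ k))
      gcongr
      simp

lemma tvec_smul (A : Matrix (Fin n) (Fin n) ℝ) (lam : ℝ) (x : Fin n → ℝ) :
    tvec A (fun k => lam + x k) = fun i => lam + tvec A x i := by
  funext i
  rw [tvec_apply, tvec_apply, tadd_sup]
  congr 1
  funext k
  ring

lemma sup_mem_colSpace {A : Matrix (Fin n) (Fin n) ℝ} {x y : Fin n → ℝ}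
    (hx : x ∈ colSpace A) (hy : y ∈ colSpace A) : x ⊔ y ∈ colSpace A := by
  obtain ⟨u, rfl⟩ := hx
  obtain ⟨v, rfl⟩ := hy
  exact ⟨u ⊔ v, tvec_sup A u v⟩

lemma smul_mem_colSpace {A : Matrix (Fin n) (Fin n) ℝ} {x : Fin n → ℝ} (lam : ℝ)
    (hx : x ∈ colSpace A) : (fun i => lam + x i) ∈ colSpace A := by
  obtain ⟨u, rfl⟩ := hx
  exact ⟨fun k => lam + u k, tvec_smul A lam u⟩

/-- colSpace A ⊆ colSpace E iff A factors as E ⊗ X. -/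
lemma colSpace_subset_iff {A E : Matrix (Fin n) (Fin n) ℝ} :
    colSpace A ⊆ colSpace E ↔ ∃ X, A = tmul E X := by
  constructor
  · intro h
    choose x hx using fun j => h (col_mem_colSpace A j)
    refine ⟨fun k j => x j k, ?_⟩
    funext i j
    have := congrFun (hx j) i
    rw [← this]
    rfl
  · rintro ⟨X, rfl⟩ z ⟨u, rfl⟩
    rw [tvec_tmul]
    exact tvec_mem_colSpace E _

lemma colSpace_tmul_subset (A B : Matrix (Fin n) (Fin n) ℝ) :
    colSpace (tmul A B) ⊆ colSpace A := by
  rintro z ⟨u, rfl⟩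
  rw [tvec_tmul]
  exact tvec_mem_colSpace A _

variable {E : Matrix (Fin n) (Fin n) ℝ}

/-- tvec E is the identity on colSpace E when E is idempotent. -/
lemma tvec_E_id (hE : tmul E E = E) {x : Fin n → ℝ} (hx : x ∈ colSpace E) :
    tvec E x = x := by
  obtain ⟨u, rfl⟩ := hx
  rw [← tvec_tmul, hE]

lemma tmul_left_id (hE : tmul E E = E) {A : Matrix (Fin n) (Fin n) ℝ}
    (hA : colSpace A ⊆ colSpace E) : tmul E A = A := by
  obtain ⟨X, rfl⟩ := colSpace_subset_iff.mp hA
  rw [← tmul_assoc, hE]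

lemma tmul_right_id (hE : tmul E E = E) {A : Matrix (Fin n) (Fin n) ℝ}
    (hA : colSpace Aᵀ ⊆ colSpace Eᵀ) : tmul A E = A := by
  obtain ⟨X, hX⟩ := colSpace_subset_iff.mp hA
  have hA' : A = tmul Xᵀ E := by
    have := congrArg Matrix.transpose hX
    rw [transpose_transpose, tmul_transpose, transpose_transpose] at this
    exact this
  rw [hA', tmul_assoc, hE]

/-- Existence of a (two-sided, relative to E) inverse for elements of the H-class. -/
lemma exists_inverse (hE : tmul E E = E) {A : Matrix (Fin n) (Fin n) ℝ}
    (hA : A ∈ Hclass E) :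
    ∃ A', tmul A A' = E ∧ tmul A' A = E ∧ colSpace A' ⊆ colSpace E ∧
      colSpace A'ᵀ ⊆ colSpace Eᵀ := by
  obtain ⟨hcol, hrow⟩ := hA
  -- E = A ⊗ X from colSpace E ⊆ colSpace A
  obtain ⟨X, hX⟩ := colSpace_subset_iff.mp (le_of_eq hcol.symm)
  -- E = Y ⊗ A from rowspace
  obtain ⟨Z, hZ⟩ := colSpace_subset_iff.mp (le_of_eq hrow.symm)
  have hY : E = tmul Zᵀ A := by
    have := congrArg Matrix.transpose hZ
    rw [transpose_transpose, tmul_transpose, transpose_transpose] at this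
    exact this
  have hAE : tmul A E = A := tmul_right_id hE (le_of_eq hrow)
  have hEA : tmul E A = A := tmul_left_id hE (le_of_eq hcol)
  refine ⟨tmul E X, ?_, ?_, ?_, ?_⟩
  · rw [← tmul_assoc, hAE, ← hX]
  · -- tmul (E ⊗ X) A = E : rewrite E⊗X = Z ⊗ E
    have key : tmul E X = tmul Zᵀ E := by
      calc tmul E X = tmul (tmul Zᵀ A) X := by rw [← hY]
      _ = tmul Zᵀ (tmul A X) := tmul_assoc _ _ _
      _ = tmul Zᵀ E := by rw [← hX]
    rw [key, tmul_assoc, hEA, ← hY]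
  · exact colSpace_tmul_subset E X
  · have key : tmul E X = tmul Zᵀ E := by
      calc tmul E X = tmul (tmul Zᵀ A) X := by rw [← hY]
      _ = tmul Zᵀ (tmul A X) := tmul_assoc _ _ _
      _ = tmul Zᵀ E := by rw [← hX]
    rw [key, tmul_transpose]
    exact colSpace_tmul_subset _ _

/-- f commutes with finite sups of families inside colSpace E. -/
lemma aut_map_sup' {f : (Fin n → ℝ) → (Fin n → ℝ)} (hf : IsTropAut E f)
    {ι : Type*} (s : Finset ι) (hs : s.Nonempty) (g : ι → (Fin n → ℝ))
    (hg : ∀ j ∈ s, g j ∈ colSpace E) :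
    f (s.sup' hs g) = s.sup' hs (fun j => f (g j)) ∧ s.sup' hs g ∈ colSpace E := by
  induction hs using Finset.Nonempty.cons_induction with
  | singleton a => simpa using hg a (by simp)
  | cons a s h hs ih =>
    have hga : g a ∈ colSpace E := hg a (mem_cons_self a s)
    have ih' := ih (fun j hj => hg j (mem_cons_of_mem hj))
    rw [Finset.sup'_cons hs, Finset.sup'_cons hs]
    constructor
    · rw [hf.2.1 _ hga _ ih'.2, ih'.1]
    · exact sup_mem_colSpace hga ih'.2

/-- The fundamental computation: for an automorphism f of colSpace E, the matrix ψ(f)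
with columns f(E_j) satisfies tvec (ψ f) x = f (tvec E x) for all x. -/
lemma psi_spec {f : (Fin n → ℝ) → (Fin n → ℝ)} (hf : IsTropAut E f) (x : Fin n → ℝ) :
    tvec (fun i j => f (fun k => E k j) i) x = f (tvec E x) := by
  set A : Matrix (Fin n) (Fin n) ℝ := fun i j => f (fun k => E k j) i with hA
  have hcols : ∀ j ∈ univ, (fun k => x j + E k j) ∈ colSpace E := fun j _ =>
    smul_mem_colSpace (x j) (col_mem_colSpace E j)
  have hrep : tvec E x = univ.sup' univ_nonempty (fun j => fun k => x j + E k j) := by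
    funext k
    rw [Finset.sup'_apply, tvec_apply]
    congr 1
    funext j
    ring
  rw [hrep, (aut_map_sup' hf univ univ_nonempty _ hcols).1]
  funext i
  rw [Finset.sup'_apply, tvec_apply]
  congr 1
  funext j
  have := congrFun (hf.2.2 (x j) _ (col_mem_colSpace E j)) i
  rw [this]
  ring

/-- ψ(f) agrees with f on colSpace E. -/
lemma psi_agree (hE : tmul E E = E) {f : (Fin n → ℝ) → (Fin n → ℝ)}
    (hf : IsTropAut E f) {x : Fin n → ℝ} (hx : x ∈ colSpace E) :
    tvec (fun i j => f (fun k => E k j) i) x = f x := by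
  rw [psi_spec hf, tvec_E_id hE hx]

/-- the inverse-on-colSpace of an automorphism is an automorphism. -/
lemma inv_isTropAut (hE : tmul E E = E) {f : (Fin n → ℝ) → (Fin n → ℝ)}
    (hf : IsTropAut E f) :
    IsTropAut E (Function.invFunOn f (colSpace E)) := by
  set g := Function.invFunOn f (colSpace E) with hgdef
  have hinv : Set.InvOn g f (colSpace E) (colSpace E) := hf.1.invOn_invFunOn
  have hbij : Set.BijOn g (colSpace E) (colSpace E) := Set.BijOn.symm hinv.symm hf.1
  have hgf : ∀ x ∈ colSpace E, g (f x) = x := fun x hx => hinv.1 hx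
  have hfg : ∀ x ∈ colSpace E, f (g x) = x := fun x hx => hinv.2 hx
  refine ⟨hbij, ?_, ?_⟩
  · intro x hx y hy
    have hgx := hbij.mapsTo hx
    have hgy := hbij.mapsTo hy
    have : x ⊔ y = f (g x ⊔ g y) := by
      rw [hf.2.1 _ hgx _ hgy, hfg x hx, hfg y hy]
    rw [this, hgf _ (sup_mem_colSpace hgx hgy)]
  · intro lam x hx
    have hgx := hbij.mapsTo hx
    have : (fun i => lam + x i) = f (fun i => lam + g x i) := by
      rw [hf.2.2 lam _ hgx, hfg x hx]
    rw [this, hgf _ (smul_mem_colSpace lam hgx)]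

/-- ψ(f) belongs to the H-class of E, together with the left/right identity facts. -/
lemma psi_mem_Hclass (hE : tmul E E = E) {f : (Fin n → ℝ) → (Fin n → ℝ)}
    (hf : IsTropAut E f) :
    (fun i j => f (fun k => E k j) i) ∈ Hclass E := by
  set A : Matrix (Fin n) (Fin n) ℝ := fun i j => f (fun k => E k j) i with hAdef
  -- column space equality
  have hsub : colSpace A ⊆ colSpace E := by
    rintro z ⟨u, rfl⟩
    rw [psi_spec hf]
    exact hf.1.mapsTo (tvec_mem_colSpace E u)
  have hsup : colSpace E ⊆ colSpace A := by
    intro z hz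
    obtain ⟨w, hw, rfl⟩ := hf.1.surjOn hz
    obtain ⟨u, rfl⟩ := hw
    exact ⟨u, psi_spec hf u⟩
  have hcol : colSpace A = colSpace E := le_antisymm hsub hsup
  -- A ⊗ E = A
  have hAE : tmul A E = A := by
    funext i j
    rw [tmul_apply, psi_agree hE hf (col_mem_colSpace E j)]
  -- the inverse automorphism and its matrix B
  have hg := inv_isTropAut hE hf
  set g := Function.invFunOn f (colSpace E) with hgdef
  set B : Matrix (Fin n) (Fin n) ℝ := fun i j => g (fun k => E k j) i with hBdef
  have hinv : Set.InvOn g f (colSpace E) (colSpace E) := hf.1.invOn_invFunOn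
  -- B ⊗ A = E
  have hBA : tmul B A = E := by
    funext i j
    have hcolA : (fun k => A k j) = f (fun k => E k j) := rfl
    rw [tmul_apply, hcolA, psi_agree hE hg (hf.1.mapsTo (col_mem_colSpace E j))]
    exact congrFun (hinv.1 (col_mem_colSpace E j)) i
  constructor
  · exact hcol
  · apply le_antisymm
    · -- colSpace Aᵀ ⊆ colSpace Eᵀ since A = A ⊗ E so Aᵀ = Eᵀ ⊗ Aᵀ
      apply colSpace_subset_iff.mpr
      refine ⟨Aᵀ, ?_⟩
      rw [← tmul_transpose, hAE]
    · apply colSpace_subset_iff.mpr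
      refine ⟨Bᵀ, ?_⟩
      rw [← tmul_transpose, hBA]

end Aux

/-- The map ψ sending an automorphism f of C(E) to the matrix with columns
f(E_1),…,f(E_n) is a group isomorphism from Aut(C(E)) onto H_E: every element
of H_E acts on C(E) as an automorphism, every automorphism of C(E) agrees on
C(E) with left multiplication by a unique element of H_E (namely its image
under ψ, whose j-th column is the image of the j-th column of E), and the
correspondence is multiplicative (composition ↔ tropical matrix product). -/
theorem aut_colSpace_iso_Hclass {n : ℕ} [NeZero n]
    (E : Matrix (Fin n) (Fin n) ℝ) (hE : tmul E E = E) :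
    (∀ A ∈ Hclass E, IsTropAut E (tvec A)) ∧
    (∀ f, IsTropAut E f → ∃! A, A ∈ Hclass E ∧
      (∀ j i, A i j = f (fun k => E k j) i) ∧
      (∀ x ∈ colSpace E, f x = tvec A x)) ∧
    (∀ A ∈ Hclass E, ∀ B ∈ Hclass E, tmul A B ∈ Hclass E ∧
      ∀ x ∈ colSpace E, tvec A (tvec B x) = tvec (tmul A B) x) := by
  refine ⟨?_, ?_, ?_⟩
  · -- Part 1: every element of H_E acts as an automorphism on colSpace E
    intro A hA
    obtain ⟨A', hAA', hA'A, hA'col, hA'row⟩ := exists_inverse hE hA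
    refine ⟨⟨?_, ?_, ?_⟩, ?_, ?_⟩
    · -- maps to
      intro x _
      rw [← hA.1]
      exact tvec_mem_colSpace A x
    · -- injective
      intro x hx y hy hxy
      have h1 : tvec A' (tvec A x) = tvec A' (tvec A y) := by rw [hxy]
      rw [← tvec_tmul, ← tvec_tmul, hA'A, tvec_E_id hE hx, tvec_E_id hE hy] at h1
      exact h1
    · -- surjective
      intro z hz
      obtain ⟨u, rfl⟩ := hz
      refine ⟨tvec A' (tvec E u), hA'col (tvec_mem_colSpace A' _), ?_⟩
      rw [← tvec_tmul, hAA', tvec_E_id hE (tvec_mem_colSpace E u)]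
    · intro x _ y _
      exact tvec_sup A x y
    · intro lam x _
      exact tvec_smul A lam x
  · -- Part 2: ψ is a bijection onto H_E
    intro f hf
    refine ⟨fun i j => f (fun k => E k j) i, ⟨psi_mem_Hclass hE hf, fun j i => rfl,
      fun x hx => (psi_agree hE hf hx).symm⟩, ?_⟩
    rintro A ⟨-, hcols, -⟩
    funext i j
    exact hcols j i
  · -- Part 3: multiplicativity
    intro A hA B hB
    obtain ⟨A', hAA', hA'A, -, -⟩ := exists_inverse hE hA
    obtain ⟨B', hBB', hB'B, -, -⟩ := exists_inverse hE hB
    have hAE : tmul A E = A := tmul_right_id hE (le_of_eq hA.2)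
    have hEB : tmul E B = B := tmul_left_id hE (le_of_eq hB.1)
    constructor
    · constructor
      · -- column space of A ⊗ B equals that of E
        apply le_antisymm
        · exact (colSpace_tmul_subset A B).trans (le_of_eq hA.1)
        · apply colSpace_subset_iff.mpr
          refine ⟨tmul B' A', ?_⟩
          calc E = tmul A A' := hAA'.symm
          _ = tmul (tmul A E) A' := by rw [hAE]
          _ = tmul (tmul A (tmul B B')) A' := by rw [hBB']
          _ = tmul (tmul A B) (tmul B' A') := by
              rw [← tmul_assoc A B B', tmul_assoc (tmul A B) B' A']
      · -- row space of A ⊗ B equals that of E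
        rw [tmul_transpose]
        apply le_antisymm
        · exact (colSpace_tmul_subset Bᵀ Aᵀ).trans (le_of_eq hB.2)
        · apply colSpace_subset_iff.mpr
          refine ⟨(tmul B' A')ᵀ, ?_⟩
          have hfact : E = tmul (tmul B' A') (tmul A B) := by
            calc E = tmul B' B := hB'B.symm
            _ = tmul B' (tmul E B) := by rw [hEB]
            _ = tmul B' (tmul (tmul A' A) B) := by rw [hA'A]
            _ = tmul (tmul B' A') (tmul A B) := by
                rw [tmul_assoc A' A B, ← tmul_assoc B' A' (tmul A B)]
          rw [hfact, tmul_transpose, tmul_transpose]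
    · intro x _
      exact (tvec_tmul A B x).symm
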